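/- Let (Ω, μ) be a measure space, let A be a real symmetric invertible N×N matrix with ρ_min = min_i |λ_i| (λ_i the eigenvalues of A), and let F, β₁, β₂ : Ω → ℝ^N be measurable functions such that ω ↦ ‖Aβ₁(ω) − F(ω)‖² and ω ↦ ‖Aβ₂(ω) − F(ω)‖² are μ-integrable and ∫_Ω ‖Aβ₁(ω) − F(ω)‖² dμ(ω) ≤ ∫_Ω ‖Aβ₂(ω) − F(ω)‖² dμ(ω). Then ∫_Ω ‖β₁(ω) − β₂(ω)‖² dμ(ω) ≤ (4/ρ_min²) ∫_Ω ‖Aβ₂(ω) − F(ω)‖² dμ(ω). (This is the stability estimate used in the generalization-error analysis: the squared L²(Ω) distance between two coefficient maps is controlled, up to the factor 4/ρ_min², by the larger of their residual losses.) -/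

import Mathlib

/-!
Since `A` is invertible, every eigenvalue has modulus at least `ρmin > 0`, so expanding in an
orthonormal eigenbasis gives `ρmin ‖v‖ ≤ ‖A v‖`. With `v = β₁ - β₂` and the triangle inequality
through `F` this yields `ρmin² ‖β₁ - β₂‖² ≤ 2 (‖Aβ₁ - F‖² + ‖Aβ₂ - F‖²)` pointwise; integrating and
using that `β₁` has the smaller loss gives the factor `4 / ρmin²`.
-/

open MeasureTheory

/-- Euclidean norm of a vector in `ℝ^N`. -/
noncomputable def euclNorm {N : ℕ} (v : Fin N → ℝ) : ℝ :=
  ‖(EuclideanSpace.equiv (Fin N) ℝ).symm v‖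

namespace LinearMap.IsSymmetric

variable {𝕜 E : Type*} [RCLike 𝕜] [NormedAddCommGroup E] [InnerProductSpace 𝕜 E]
  [FiniteDimensional 𝕜 E] {T : E →ₗ[𝕜] E} {n : ℕ}

theorem mul_norm_le_norm_apply (hT : T.IsSymmetric) (hn : Module.finrank 𝕜 E = n) {ρ : ℝ}
    (hρ : 0 ≤ ρ) (hle : ∀ i, ρ ≤ |hT.eigenvalues hn i|) (v : E) : ρ * ‖v‖ ≤ ‖T v‖ := by
  set b := hT.eigenvectorBasis hn
  have hsq : (ρ * ‖v‖) ^ 2 ≤ ‖T v‖ ^ 2 := by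
    rw [← b.repr.norm_map v, ← b.repr.norm_map (T v), mul_pow, EuclideanSpace.norm_sq_eq,
      EuclideanSpace.norm_sq_eq, Finset.mul_sum]
    gcongr with i
    rw [hT.eigenvectorBasis_apply_self_apply, norm_mul, mul_pow, RCLike.norm_ofReal]
    gcongr
    exact hle i
  exact (pow_le_pow_iff_left₀ (by positivity) (norm_nonneg _) two_ne_zero).mp hsq

end LinearMap.IsSymmetric

namespace Matrix.IsHermitian

variable {𝕜 n : Type*} [RCLike 𝕜] [Fintype n] [DecidableEq n] {A : Matrix n n 𝕜}

theorem mul_norm_le_norm_toEuclideanLin (hA : A.IsHermitian) {ρ : ℝ} (hρ : 0 ≤ ρ)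
    (hle : ∀ i, ρ ≤ |hA.eigenvalues i|) (v : EuclideanSpace 𝕜 n) :
    ρ * ‖v‖ ≤ ‖A.toEuclideanLin v‖ :=
  (isSymmetric_toEuclideanLin_iff.mpr hA).mul_norm_le_norm_apply _ hρ
    (fun i => by
      simpa [eigenvalues, eigenvalues₀] using hle (Fintype.equivOfCardEq (Fintype.card_fin _) i))
    v

theorem eigenvalues_ne_zero_of_isUnit (hA : A.IsHermitian) (hunit : IsUnit A) (i : n) :
    hA.eigenvalues i ≠ 0 := by
  have hdet : A.det ≠ 0 := ((Matrix.isUnit_iff_isUnit_det A).mp hunit).ne_zero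
  rw [hA.det_eq_prod_eigenvalues, Finset.prod_ne_zero_iff] at hdet
  exact_mod_cast hdet i (Finset.mem_univ i)

end Matrix.IsHermitian

theorem sq_mul_norm_sub_sq_le_two_mul {E F G : Type*} [SeminormedAddCommGroup E]
    [SeminormedAddCommGroup F] [FunLike G E F] [AddMonoidHomClass G E F] (T : G) {ρ : ℝ} (hρ : 0 ≤ ρ)
    (hT : ∀ v, ρ * ‖v‖ ≤ ‖T v‖) (x y : E) (f : F) :
    ρ ^ 2 * ‖x - y‖ ^ 2 ≤ 2 * (‖T x - f‖ ^ 2 + ‖T y - f‖ ^ 2) := by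
  have hdist : ρ * ‖x - y‖ ≤ ‖T x - f‖ + ‖T y - f‖ :=
    calc ρ * ‖x - y‖ ≤ ‖T x - T y‖ := map_sub T x y ▸ hT (x - y)
      _ = ‖(T x - f) - (T y - f)‖ := by rw [sub_sub_sub_cancel_right]
      _ ≤ ‖T x - f‖ + ‖T y - f‖ := norm_sub_le _ _
  calc ρ ^ 2 * ‖x - y‖ ^ 2 = (ρ * ‖x - y‖) ^ 2 := (mul_pow ..).symm
    _ ≤ (‖T x - f‖ + ‖T y - f‖) ^ 2 := by gcongr
    _ ≤ 2 * (‖T x - f‖ ^ 2 + ‖T y - f‖ ^ 2) := add_sq_le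

theorem integral_le_of_const_mul_le_two_mul_add {Ω : Type*} [MeasurableSpace Ω] {μ : Measure Ω}
    {g h₁ h₂ : Ω → ℝ} {c : ℝ} (hc : 0 < c) (hg : 0 ≤ᵐ[μ] g) (hh₁ : Integrable h₁ μ)
    (hh₂ : Integrable h₂ μ) (hle₁₂ : ∫ ω, h₁ ω ∂μ ≤ ∫ ω, h₂ ω ∂μ)
    (hgh : ∀ᵐ ω ∂μ, c * g ω ≤ 2 * (h₁ ω + h₂ ω)) :
    ∫ ω, g ω ∂μ ≤ 4 / c * ∫ ω, h₂ ω ∂μ := by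
  have hmono : ∫ ω, g ω ∂μ ≤ ∫ ω, 2 / c * (h₁ ω + h₂ ω) ∂μ := by
    refine integral_mono_of_nonneg hg ((hh₁.add hh₂).const_mul _) ?_
    filter_upwards [hgh] with ω hω
    rw [div_mul_eq_mul_div, le_div_iff₀ hc, mul_comm]
    exact hω
  rw [integral_const_mul, integral_add hh₁ hh₂] at hmono
  calc ∫ ω, g ω ∂μ ≤ 2 / c * (∫ ω, h₁ ω ∂μ + ∫ ω, h₂ ω ∂μ) := hmono
    _ ≤ 2 / c * (∫ ω, h₂ ω ∂μ + ∫ ω, h₂ ω ∂μ) := by gcongr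
    _ = 4 / c * ∫ ω, h₂ ω ∂μ := by ring

theorem stability_estimate_general
    {N : ℕ} (A : Matrix (Fin N) (Fin N) ℝ)
    (hA : A.IsHermitian) (hinv : IsUnit A)
    (ρmin : ℝ)
    (hρmin : IsLeast {r : ℝ | ∃ i : Fin N, r = |hA.eigenvalues i|} ρmin)
    {Ω : Type*} [MeasurableSpace Ω] (μ : Measure Ω)
    (F β₁ β₂ : Ω → Fin N → ℝ)
    (hint₁ : Integrable (fun ω => (euclNorm (A.mulVec (β₁ ω) - F ω)) ^ 2) μ)
    (hint₂ : Integrable (fun ω => (euclNorm (A.mulVec (β₂ ω) - F ω)) ^ 2) μ)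
    (hmin : (∫ ω, (euclNorm (A.mulVec (β₁ ω) - F ω)) ^ 2 ∂μ)
        ≤ ∫ ω, (euclNorm (A.mulVec (β₂ ω) - F ω)) ^ 2 ∂μ) :
    (∫ ω, (euclNorm (β₁ ω - β₂ ω)) ^ 2 ∂μ)
      ≤ (4 / ρmin ^ 2) * ∫ ω, (euclNorm (A.mulVec (β₂ ω) - F ω)) ^ 2 ∂μ := by
  obtain ⟨⟨j, hj⟩, hρ_le⟩ := hρmin
  have hρ : 0 < ρmin := hj ▸ abs_pos.mpr (hA.eigenvalues_ne_zero_of_isUnit hinv j)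
  have hlower := hA.mul_norm_le_norm_toEuclideanLin hρ.le fun i => hρ_le ⟨i, rfl⟩
  refine integral_le_of_const_mul_le_two_mul_add (by positivity)
    (ae_of_all _ fun ω => sq_nonneg _) hint₁ hint₂ hmin (ae_of_all _ fun ω => ?_)
  -- Matches the goal up to defeq: `euclNorm v = ‖WithLp.toLp 2 v‖` and
  -- `A.toEuclideanLin (WithLp.toLp 2 v) = WithLp.toLp 2 (A *ᵥ v)`.
  exact sq_mul_norm_sub_sq_le_two_mul A.toEuclideanLin hρ.le hlower
    (WithLp.toLp 2 (β₁ ω)) (WithLp.toLp 2 (β₂ ω)) (WithLp.toLp 2 (F ω))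

/-- (Stability estimate used in the generalization-error analysis.)
Let `(Ω, μ)` be a measure space, `A` a real symmetric (= Hermitian over `ℝ`) invertible
`N×N` matrix with `ρ_min = min_i |λ_i|`, and let `F, β₁, β₂ : Ω → ℝ^N` be measurable with
`ω ↦ ‖Aβ₁(ω) − F(ω)‖²` and `ω ↦ ‖Aβ₂(ω) − F(ω)‖²` μ-integrable and
`∫ ‖Aβ₁ − F‖² dμ ≤ ∫ ‖Aβ₂ − F‖² dμ`.  Then
`∫ ‖β₁ − β₂‖² dμ ≤ (4/ρ_min²) ∫ ‖Aβ₂ − F‖² dμ`. -/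
theorem stability_estimate
    {N : ℕ} (hN : 0 < N) (A : Matrix (Fin N) (Fin N) ℝ)
    (hA : A.IsHermitian) (hinv : IsUnit A)
    (ρmin : ℝ)
    (hρmin : IsLeast {r : ℝ | ∃ i : Fin N, r = |hA.eigenvalues i|} ρmin)
    {Ω : Type*} [MeasurableSpace Ω] (μ : Measure Ω)
    (F β₁ β₂ : Ω → Fin N → ℝ)
    (hFmeas : Measurable F) (hβ₁meas : Measurable β₁) (hβ₂meas : Measurable β₂)
    (hint₁ : Integrable (fun ω => (euclNorm (A.mulVec (β₁ ω) - F ω)) ^ 2) μ)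
    (hint₂ : Integrable (fun ω => (euclNorm (A.mulVec (β₂ ω) - F ω)) ^ 2) μ)
    (hmin : (∫ ω, (euclNorm (A.mulVec (β₁ ω) - F ω)) ^ 2 ∂μ)
        ≤ ∫ ω, (euclNorm (A.mulVec (β₂ ω) - F ω)) ^ 2 ∂μ) :
    (∫ ω, (euclNorm (β₁ ω - β₂ ω)) ^ 2 ∂μ)
      ≤ (4 / ρmin ^ 2) * ∫ ω, (euclNorm (A.mulVec (β₂ ω) - F ω)) ^ 2 ∂μ :=
  stability_estimate_general A hA hinv ρmin hρmin μ F β₁ β₂ hint₁ hint₂ hmin
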